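/- Let λ < 0 with ‖(1,1)‖_m > 1. Then: (a) for all x, y ≥ 0 with min(x,y)·‖(1,1)‖_m ≥ −1/λ, the joint survival function satisfies S(x,y) = 0; and (b) for all β, γ > 0 there exists t₀ < ∞ such that S(q_A(t^β), q_B(t^γ)) = 0 for all t > t₀. -/

import Mathlib

open MeasureTheory Filter Set

noncomputable section

/-- A positive function defined near `+∞` is slowly varying at infinity if
`L(at)/L(t) → 1` as `t → ∞` for every `a > 0`. -/
def SlowlyVarying (L : ℝ → ℝ) : Prop :=
  (∀ᶠ t in atTop, 0 < L t) ∧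
    ∀ a : ℝ, 0 < a → Tendsto (fun t => L (a * t) / L t) atTop (nhds 1)

/-- `N` is a norm on `ℝ²`, viewed as a two-argument function. -/
def IsNorm2 (N : ℝ → ℝ → ℝ) : Prop :=
  (∀ x y, 0 ≤ N x y) ∧ (∀ x y, N x y = 0 ↔ x = 0 ∧ y = 0) ∧
    (∀ c x y, N (c * x) (c * y) = |c| * N x y) ∧
    (∀ x₁ y₁ x₂ y₂, N (x₁ + x₂) (y₁ + y₂) ≤ N x₁ y₁ + N x₂ y₂)

/-- Condition (C1): symmetry of the norm. -/
def CondC1 (N : ℝ → ℝ → ℝ) : Prop := ∀ x y, N x y = N y x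

/-- Condition (C2): the norm dominates the sup-norm. -/
def CondC2 (N : ℝ → ℝ → ℝ) : Prop := ∀ x y : ℝ, max |x| |y| ≤ N x y

/-- Condition (C3): equality with the sup-norm off the diagonal. -/
def CondC3 (N : ℝ → ℝ → ℝ) : Prop :=
  ∃ x₀ y₀ : ℝ, 0 ≤ x₀ ∧ 0 ≤ y₀ ∧ x₀ ≠ y₀ ∧ N x₀ y₀ = max x₀ y₀

/-- τ(v) = ‖(v, 1−v)‖_m / v.  (At `v = 0` this real-valued version takes the
junk value `0` instead of `+∞`; this is irrelevant for all integrals below,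
which are taken against an atomless measure.) -/
def tau (N : ℝ → ℝ → ℝ) (v : ℝ) : ℝ := N v (1 - v) / v

/-- The probability measure associated with a distribution function `F_V` on
`[0,1]` that is continuous (no atoms) and strictly increasing (positive mass on
every nonempty open subinterval of `[0,1]`): Assumption 1. -/
def GoodMeasure (μ : Measure ℝ) : Prop :=
  μ ((Set.Icc (0:ℝ) 1)ᶜ) = 0 ∧ (∀ x : ℝ, μ {x} = 0) ∧
    ∀ a b : ℝ, 0 ≤ a → a < b → b ≤ 1 → 0 < μ (Set.Ioo a b)

/-- The GP(1,λ) survivor function `(1 + λx)₊^{−1/λ}`, interpreted as `e^{−x}`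
when `λ = 0`. -/
def gpTail (l x : ℝ) : ℝ :=
  if l = 0 then Real.exp (-x) else (max (1 + l * x) 0) ^ (-1 / l)

/-- Marginal survival function `S_A(x) = ∫₀¹ (1 + λ x τ(v))₊^{−1/λ} dF_V(v)`. -/
def survA (N : ℝ → ℝ → ℝ) (μ : Measure ℝ) (l x : ℝ) : ℝ :=
  ∫ v, gpTail l (x * tau N v) ∂μ

/-- Marginal survival function `S_B(y) = ∫₀¹ (1 + λ y τ(1−v))₊^{−1/λ} dF_V(v)`. -/
def survB (N : ℝ → ℝ → ℝ) (μ : Measure ℝ) (l y : ℝ) : ℝ :=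
  ∫ v, gpTail l (y * tau N (1 - v)) ∂μ

/-- Joint survival function
`S(x,y) = ∫₀¹ (1 + λ max{x τ(v), y τ(1−v)})₊^{−1/λ} dF_V(v)`. -/
def survJ (N : ℝ → ℝ → ℝ) (μ : Measure ℝ) (l x y : ℝ) : ℝ :=
  ∫ v, gpTail l (max (x * tau N v) (y * tau N (1 - v))) ∂μ

/-!
Part (a): for `v ≤ 1/2` the triangle inequality gives `‖(1,1)‖ ≤ 2‖(v,1-v)‖ ≤ τ(v)`, and
symmetrically for `v ≥ 1/2` with `τ(1-v)`, so `max {x τ(v), y τ(1-v)} ≥ min(x,y)‖(1,1)‖ ≥ -1/λ`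
and the integrand vanishes on `(0,1)`.

Part (b): by (C3) some `v₀ ∈ (0,1]` has `τ(v₀) = 1`. For `c < -1/λ` the integrands of `S_A(c)` and
`S_B(c)` are continuous and positive at `v₀` and `1 - v₀` respectively, so the antitone marginals
satisfy `S_A, S_B ≥ δ > 0` on `[0,c]`. Since `S_A(q_A(t^β)) = t^{-β} → 0`, eventually `q_A(t^β) > c`, and likewise for `q_B`.
Taking `c = -1/(λ‖(1,1)‖) < -1/λ` reduces (b) to (a).
-/

open Topology

lemma gpTail_nonneg (l z : ℝ) : 0 ≤ gpTail l z := by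
  unfold gpTail
  split_ifs
  · exact (Real.exp_pos _).le
  · exact Real.rpow_nonneg (le_max_right _ _) _

lemma measurable_gpTail (l : ℝ) : Measurable (gpTail l) := by
  unfold gpTail
  split_ifs <;> fun_prop

section NegativeShape

variable {l : ℝ}

lemma gpTail_of_neg (hl : l < 0) (z : ℝ) : gpTail l z = max (1 + l * z) 0 ^ (-1 / l) :=
  if_neg hl.ne

lemma neg_one_div_pos (hl : l < 0) : 0 < -1 / l :=
  div_pos_of_neg_of_neg (by norm_num) hl

lemma gpTail_eq_zero (hl : l < 0) {z : ℝ} (hz : -1 / l ≤ z) : gpTail l z = 0 := by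
  have : 1 + l * z ≤ 0 := by
    have := (div_le_iff_of_neg hl).mp hz
    linarith
  rw [gpTail_of_neg hl, max_eq_right this, Real.zero_rpow (neg_one_div_pos hl).ne']

lemma gpTail_pos (hl : l < 0) {z : ℝ} (hz : z < -1 / l) : 0 < gpTail l z := by
  have : 0 < 1 + l * z := by
    have := (lt_div_iff_of_neg hl).mp hz
    linarith
  rw [gpTail_of_neg hl, max_eq_left this.le]
  exact Real.rpow_pos_of_pos this _

lemma gpTail_le_one (hl : l < 0) {z : ℝ} (hz : 0 ≤ z) : gpTail l z ≤ 1 := by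
  rw [gpTail_of_neg hl]
  refine Real.rpow_le_one (le_max_right _ _) (max_le ?_ zero_le_one) (neg_one_div_pos hl).le
  nlinarith

lemma gpTail_antitone (hl : l < 0) : Antitone (gpTail l) := by
  intro z z' h
  simp only [gpTail_of_neg hl]
  refine Real.rpow_le_rpow (le_max_right _ _) (max_le_max ?_ le_rfl) (neg_one_div_pos hl).le
  linarith [mul_le_mul_of_nonpos_left h hl.le]

lemma continuous_gpTail (hl : l < 0) : Continuous (gpTail l) := by
  simp only [funext (gpTail_of_neg hl)]
  exact (Real.continuous_rpow_const (neg_one_div_pos hl).le).comp (by fun_prop)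

end NegativeShape

section Integrals

variable {μ : Measure ℝ} {l : ℝ} {h h' : ℝ → ℝ}

lemma GoodMeasure.ae_mem_Icc (hμ : GoodMeasure μ) : ∀ᵐ v ∂μ, v ∈ Icc (0 : ℝ) 1 :=
  ae_iff.mpr hμ.1

lemma GoodMeasure.ae_mem_Ioo (hμ : GoodMeasure μ) : ∀ᵐ v ∂μ, v ∈ Ioo (0 : ℝ) 1 := by
  filter_upwards [hμ.ae_mem_Icc, (Ioo_ae_eq_Icc' (hμ.2.1 0) (hμ.2.1 1)).mem_iff] with v hv hiff
  exact hiff.mpr hv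

lemma GoodMeasure.measure_pos_of_mem_nhds (hμ : GoodMeasure μ) {w : ℝ} {s : Set ℝ}
    (hw : w ∈ Icc (0 : ℝ) 1) (hs : s ∈ 𝓝 w) : 0 < μ s := by
  obtain ⟨ε, hε, hball⟩ := Metric.mem_nhds_iff.mp hs
  refine (hμ.2.2 (max 0 (w - ε)) (min 1 (w + ε)) (le_max_left _ _) ?_ (min_le_left _ _)).trans_le
    (measure_mono fun v hv => hball ?_)
  · obtain ⟨hw0, hw1⟩ := hw
    simp only [max_lt_iff, lt_min_iff]
    refine ⟨⟨?_, ?_⟩, ?_, ?_⟩ <;> linarith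
  · obtain ⟨hlo, hhi⟩ := hv
    rw [Metric.mem_ball, Real.dist_eq, abs_lt]
    constructor <;> linarith [le_max_right 0 (w - ε), min_le_right 1 (w + ε)]

lemma integrable_gpTail_comp [IsFiniteMeasure μ] (hl : l < 0) (hh : Measurable h)
    (h0 : ∀ᵐ v ∂μ, 0 ≤ h v) : Integrable (fun v => gpTail l (h v)) μ := by
  refine Integrable.of_bound ((measurable_gpTail l).comp hh).aestronglyMeasurable 1 ?_
  filter_upwards [h0] with v hv
  rw [Real.norm_of_nonneg (gpTail_nonneg _ _)]
  exact gpTail_le_one hl hv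

lemma integral_gpTail_comp_anti [IsFiniteMeasure μ] (hl : l < 0) (hh : Measurable h)
    (hh' : Measurable h') (h0 : ∀ᵐ v ∂μ, 0 ≤ h v) (hle : ∀ᵐ v ∂μ, h v ≤ h' v) :
    ∫ v, gpTail l (h' v) ∂μ ≤ ∫ v, gpTail l (h v) ∂μ := by
  have h0' : ∀ᵐ v ∂μ, 0 ≤ h' v := by
    filter_upwards [h0, hle] with v hv hv' using hv.trans hv'
  refine integral_mono_ae (integrable_gpTail_comp hl hh' h0') (integrable_gpTail_comp hl hh h0) ?_
  filter_upwards [hle] with v hv using gpTail_antitone hl hv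

/-- The integrand is positive near `w`, and `μ` charges every neighbourhood of a point of `[0,1]`. -/
lemma integral_gpTail_comp_pos [IsFiniteMeasure μ] (hμ : GoodMeasure μ) (hl : l < 0)
    (hh : Measurable h) (h0 : ∀ᵐ v ∂μ, 0 ≤ h v) {w : ℝ} (hw : w ∈ Icc (0 : ℝ) 1)
    (hcont : ContinuousAt h w) (hlt : h w < -1 / l) : 0 < ∫ v, gpTail l (h v) ∂μ := by
  rw [integral_pos_iff_support_of_nonneg (fun v => gpTail_nonneg _ _)
    (integrable_gpTail_comp hl hh h0)]
  refine hμ.measure_pos_of_mem_nhds hw (Filter.mem_of_superset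
    (hcont.eventually_lt continuousAt_const hlt) fun v hv => ?_)
  exact (gpTail_pos hl hv).ne'

end Integrals

section Norm

variable {N : ℝ → ℝ → ℝ}

lemma IsNorm2.le_abs_mul_add_abs_mul (hN : IsNorm2 N) (x y : ℝ) :
    N x y ≤ |x| * N 1 0 + |y| * N 0 1 := by
  have h := hN.2.2.2 x 0 0 y
  rw [add_zero, zero_add] at h
  have hx := hN.2.2.1 x 1 0
  have hy := hN.2.2.1 y 0 1
  simp only [mul_one, mul_zero] at hx hy
  linarith

lemma IsNorm2.sub_le (hN : IsNorm2 N) (x y x' y' : ℝ) :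
    N x y - N x' y' ≤ |x - x'| * N 1 0 + |y - y'| * N 0 1 := by
  have h := hN.2.2.2 (x - x') (y - y') x' y'
  simp only [sub_add_cancel] at h
  linarith [hN.le_abs_mul_add_abs_mul (x - x') (y - y')]

lemma IsNorm2.continuous (hN : IsNorm2 N) : Continuous fun p : ℝ × ℝ => N p.1 p.2 := by
  have hK : 0 ≤ N 1 0 + N 0 1 := add_nonneg (hN.1 1 0) (hN.1 0 1)
  refine (LipschitzWith.of_dist_le_mul (K := (N 1 0 + N 0 1).toNNReal) fun p q => ?_).continuous
  rw [Real.coe_toNNReal _ hK, Real.dist_eq, Prod.dist_eq, Real.dist_eq, Real.dist_eq]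
  have h1 := le_max_left |p.1 - q.1| |p.2 - q.2|
  have h2 := le_max_right |p.1 - q.1| |p.2 - q.2|
  have hp := hN.sub_le p.1 p.2 q.1 q.2
  have hq := hN.sub_le q.1 q.2 p.1 p.2
  rw [abs_sub_comm q.1, abs_sub_comm q.2] at hq
  rw [abs_sub_le_iff]
  constructor <;> nlinarith [hN.1 1 0, hN.1 0 1]

lemma IsNorm2.continuous_apply_one_sub (hN : IsNorm2 N) : Continuous fun v : ℝ => N v (1 - v) :=
  hN.continuous.comp (by fun_prop : Continuous fun v : ℝ => (v, 1 - v))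

lemma measurable_tau (hN : IsNorm2 N) : Measurable (tau N) :=
  hN.continuous_apply_one_sub.measurable.div measurable_id

lemma measurable_tau_one_sub (hN : IsNorm2 N) : Measurable fun v => tau N (1 - v) :=
  (measurable_tau hN).comp (measurable_const.sub measurable_id)

lemma continuousAt_tau (hN : IsNorm2 N) {v : ℝ} (hv : v ≠ 0) : ContinuousAt (tau N) v :=
  hN.continuous_apply_one_sub.continuousAt.div continuousAt_id hv

lemma tau_nonneg (hN : IsNorm2 N) {v : ℝ} (hv : 0 ≤ v) : 0 ≤ tau N v :=
  div_nonneg (hN.1 _ _) hv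

lemma norm_one_one_le_two_mul (hN : IsNorm2 N) (hC1 : CondC1 N) (v : ℝ) :
    N 1 1 ≤ 2 * N v (1 - v) := by
  have h := hN.2.2.2 v (1 - v) (1 - v) v
  rw [add_sub_cancel, sub_add_cancel, hC1 (1 - v) v] at h
  linarith

lemma norm_one_one_le_tau (hN : IsNorm2 N) (hC1 : CondC1 N) {v : ℝ} (hv0 : 0 < v)
    (hv : v ≤ 1 / 2) : N 1 1 ≤ tau N v := by
  rw [tau, le_div_iff₀ hv0]
  nlinarith [norm_one_one_le_two_mul hN hC1 v, hN.1 v (1 - v)]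

lemma min_mul_le_max_mul_tau (hN : IsNorm2 N) (hC1 : CondC1 N) {x y v : ℝ} (hx : 0 ≤ x)
    (hy : 0 ≤ y) (hv : v ∈ Ioo (0 : ℝ) 1) :
    min x y * N 1 1 ≤ max (x * tau N v) (y * tau N (1 - v)) := by
  obtain ⟨hv0, hv1⟩ := hv
  have hN11 : 0 ≤ N 1 1 := hN.1 1 1
  rcases le_total v (1 / 2) with h | h
  · calc min x y * N 1 1 ≤ x * N 1 1 := by gcongr; exact min_le_left x y
      _ ≤ x * tau N v := by gcongr; exact norm_one_one_le_tau hN hC1 hv0 h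
      _ ≤ _ := le_max_left _ _
  · have hτ : N 1 1 ≤ tau N (1 - v) := norm_one_one_le_tau hN hC1 (by linarith) (by linarith)
    calc min x y * N 1 1 ≤ y * N 1 1 := by gcongr; exact min_le_right x y
      _ ≤ y * tau N (1 - v) := by gcongr
      _ ≤ _ := le_max_right _ _

/-- `v₀ = w / (u + w)` puts `(v₀, 1 - v₀)` on the ray through the point `(w, u)` of (C3). -/
lemma exists_tau_eq_one (hN : IsNorm2 N) (hC1 : CondC1 N) (hC3 : CondC3 N) :
    ∃ v₀ ∈ Ioc (0 : ℝ) 1, tau N v₀ = 1 := by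
  obtain ⟨x₀, y₀, hx₀, hy₀, hne, heq⟩ := hC3
  obtain ⟨u, w, hu, huw, hNuw⟩ : ∃ u w : ℝ, 0 ≤ u ∧ u < w ∧ N u w = w := by
    rcases hne.lt_or_gt with h | h
    · exact ⟨x₀, y₀, hx₀, h, by rw [heq, max_eq_right h.le]⟩
    · exact ⟨y₀, x₀, hy₀, h, by rw [hC1, heq, max_eq_left h.le]⟩
  have hw : 0 < w := hu.trans_lt huw
  set v₀ := w / (u + w)
  have huw0 : 0 < u + w := by linarith
  have hv₀ : 0 < v₀ := div_pos hw huw0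
  refine ⟨v₀, ⟨hv₀, (div_le_one huw0).mpr (by linarith)⟩, ?_⟩
  have hscale : N v₀ (1 - v₀) = v₀ * N w u / w := by
    have h1v : 1 - v₀ = (v₀ / w) * u := by
      simp only [v₀]; field_simp; ring
    have hv : v₀ = (v₀ / w) * w := by field_simp
    have := hN.2.2.1 (v₀ / w) w u
    rw [abs_of_pos (div_pos hv₀ hw), ← hv, ← h1v] at this
    rw [this]; ring
  rw [tau, hscale, hC1, hNuw]
  field_simp

end Norm

section Survival

variable {N : ℝ → ℝ → ℝ} {μ : Measure ℝ} {l : ℝ}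

lemma survJ_eq_zero (hN : IsNorm2 N) (hC1 : CondC1 N) (hμ : GoodMeasure μ) (hl : l < 0)
    {x y : ℝ} (hx : 0 ≤ x) (hy : 0 ≤ y) (h : -1 / l ≤ min x y * N 1 1) :
    survJ N μ l x y = 0 := by
  refine integral_eq_zero_of_ae ?_
  filter_upwards [hμ.ae_mem_Ioo] with v hv
  exact gpTail_eq_zero hl (h.trans (min_mul_le_max_mul_tau hN hC1 hx hy hv))

variable [IsFiniteMeasure μ]

lemma survA_anti (hN : IsNorm2 N) (hμ : GoodMeasure μ) (hl : l < 0) {x y : ℝ} (hx : 0 ≤ x)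
    (hxy : x ≤ y) : survA N μ l y ≤ survA N μ l x := by
  have hτ := measurable_tau hN
  refine integral_gpTail_comp_anti hl (measurable_const.mul hτ) (measurable_const.mul hτ) ?_ ?_
  all_goals filter_upwards [hμ.ae_mem_Icc] with v hv
  · exact mul_nonneg hx (tau_nonneg hN hv.1)
  · exact mul_le_mul_of_nonneg_right hxy (tau_nonneg hN hv.1)

lemma survB_anti (hN : IsNorm2 N) (hμ : GoodMeasure μ) (hl : l < 0) {x y : ℝ} (hx : 0 ≤ x)
    (hxy : x ≤ y) : survB N μ l y ≤ survB N μ l x := by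
  have hτ := measurable_tau_one_sub hN
  refine integral_gpTail_comp_anti hl (measurable_const.mul hτ) (measurable_const.mul hτ) ?_ ?_
  all_goals filter_upwards [hμ.ae_mem_Icc] with v hv
  · exact mul_nonneg hx (tau_nonneg hN (sub_nonneg.mpr hv.2))
  · exact mul_le_mul_of_nonneg_right hxy (tau_nonneg hN (sub_nonneg.mpr hv.2))

lemma survA_pos (hN : IsNorm2 N) (hμ : GoodMeasure μ) (hl : l < 0) {c v₀ : ℝ} (hc : 0 ≤ c)
    (hv₀ : v₀ ∈ Ioc (0 : ℝ) 1) (hcv₀ : c * tau N v₀ < -1 / l) : 0 < survA N μ l c := by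
  refine integral_gpTail_comp_pos hμ hl (measurable_const.mul (measurable_tau hN)) ?_
    (Ioc_subset_Icc_self hv₀) (continuousAt_const.mul (continuousAt_tau hN hv₀.1.ne')) hcv₀
  filter_upwards [hμ.ae_mem_Icc] with v hv
  exact mul_nonneg hc (tau_nonneg hN hv.1)

lemma survB_pos (hN : IsNorm2 N) (hμ : GoodMeasure μ) (hl : l < 0) {c v₀ : ℝ} (hc : 0 ≤ c)
    (hv₀ : v₀ ∈ Ioc (0 : ℝ) 1) (hcv₀ : c * tau N v₀ < -1 / l) : 0 < survB N μ l c := by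
  have hw : 1 - v₀ ∈ Icc (0 : ℝ) 1 := ⟨sub_nonneg.mpr hv₀.2, by linarith [hv₀.1]⟩
  have hcont : ContinuousAt (fun v => tau N (1 - v)) (1 - v₀) := by
    refine ContinuousAt.comp (g := tau N) ?_ (by fun_prop)
    rw [sub_sub_cancel]
    exact continuousAt_tau hN hv₀.1.ne'
  refine integral_gpTail_comp_pos hμ hl
    (measurable_const.mul (measurable_tau_one_sub hN)) ?_ hw
    (continuousAt_const.mul hcont) (by rwa [sub_sub_cancel])
  filter_upwards [hμ.ae_mem_Icc] with v hv
  exact mul_nonneg hc (tau_nonneg hN (sub_nonneg.mpr hv.2))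

end Survival

lemma eventually_lt_quantile {S q : ℝ → ℝ} {c δ β : ℝ} (hδ : 0 < δ) (hβ : 0 < β)
    (hS : ∀ x, 0 ≤ x → x ≤ c → δ ≤ S x) (hq : ∀ t, 1 ≤ t → 0 ≤ q t ∧ S (q t) = 1 / t) :
    ∀ᶠ t in atTop, c < q (t ^ β) := by
  have hlim : Tendsto (fun t : ℝ => 1 / t ^ β) atTop (𝓝 0) := by
    exact (tendsto_rpow_atTop hβ).inv_tendsto_atTop.congr fun t => (one_div _).symm
  filter_upwards [hlim.eventually_lt_const hδ, eventually_ge_atTop 1] with t hlt ht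
  by_contra! hqc
  obtain ⟨hq0, hSq⟩ := hq (t ^ β) (Real.one_le_rpow ht hβ.le)
  linarith [hS _ hq0 hqc]

theorem stmt9_general (N : ℝ → ℝ → ℝ) (hN : IsNorm2 N) (hC1 : CondC1 N)
    (hC3 : CondC3 N) (μ : Measure ℝ) [IsProbabilityMeasure μ] (hμ : GoodMeasure μ)
    (l : ℝ) (hl : l < 0) (hN11 : 1 < N 1 1) :
    (∀ x y : ℝ, 0 ≤ x → 0 ≤ y → -1 / l ≤ min x y * N 1 1 → survJ N μ l x y = 0) ∧
    (∀ β γ : ℝ, 0 < β → 0 < γ → ∀ qA qB : ℝ → ℝ,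
      (∀ t : ℝ, 1 ≤ t → 0 ≤ qA t ∧ survA N μ l (qA t) = 1 / t) →
      (∀ t : ℝ, 1 ≤ t → 0 ≤ qB t ∧ survB N μ l (qB t) = 1 / t) →
      ∃ t₀ : ℝ, ∀ t : ℝ, t₀ < t → survJ N μ l (qA (t ^ β)) (qB (t ^ γ)) = 0) := by
  refine ⟨fun x y hx hy => survJ_eq_zero hN hC1 hμ hl hx hy,
    fun β γ hβ hγ qA qB hqA hqB => ?_⟩
  set c := -1 / l / N 1 1
  have hc : 0 ≤ c := div_nonneg (neg_one_div_pos hl).le (by linarith)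
  have hcN : c * N 1 1 = -1 / l := div_mul_cancel₀ _ (by linarith)
  obtain ⟨v₀, hv₀, hτ⟩ := exists_tau_eq_one hN hC1 hC3
  have hcv₀ : c * tau N v₀ < -1 / l := by
    rw [hτ, mul_one]
    exact div_lt_self (neg_one_div_pos hl) hN11
  have hA := eventually_lt_quantile (survA_pos hN hμ hl hc hv₀ hcv₀) hβ
    (fun x hx hxc => survA_anti hN hμ hl hx hxc) hqA
  have hB := eventually_lt_quantile (survB_pos hN hμ hl hc hv₀ hcv₀) hγ
    (fun y hy hyc => survB_anti hN hμ hl hy hyc) hqB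
  obtain ⟨t₀, ht₀⟩ := eventually_atTop.mp (hA.and hB)
  refine ⟨t₀, fun t ht => ?_⟩
  obtain ⟨hAt, hBt⟩ := ht₀ t ht.le
  refine survJ_eq_zero hN hC1 hμ hl (hc.trans hAt.le) (hc.trans hBt.le) ?_
  rw [← hcN]
  gcongr
  exact le_min hAt.le hBt.le

/-- Case 4 of Section 3.2: for `λ < 0` with `‖(1,1)‖_m > 1`:
(a) `S(x,y) = 0` whenever `x, y ≥ 0` and `min(x,y)·‖(1,1)‖_m ≥ −1/λ`;
(b) for all `β, γ > 0` there is `t₀ < ∞` with `S(q_A(t^β), q_B(t^γ)) = 0`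
for all `t > t₀`. -/
theorem stmt9 (N : ℝ → ℝ → ℝ) (hN : IsNorm2 N) (hC1 : CondC1 N) (hC2 : CondC2 N)
    (hC3 : CondC3 N) (μ : Measure ℝ) [IsProbabilityMeasure μ] (hμ : GoodMeasure μ)
    (l : ℝ) (hl : l < 0) (hN11 : 1 < N 1 1) :
    (∀ x y : ℝ, 0 ≤ x → 0 ≤ y → -1 / l ≤ min x y * N 1 1 → survJ N μ l x y = 0) ∧
    (∀ β γ : ℝ, 0 < β → 0 < γ → ∀ qA qB : ℝ → ℝ,
      (∀ t : ℝ, 1 ≤ t → 0 ≤ qA t ∧ survA N μ l (qA t) = 1 / t) →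
      (∀ t : ℝ, 1 ≤ t → 0 ≤ qB t ∧ survB N μ l (qB t) = 1 / t) →
      ∃ t₀ : ℝ, ∀ t : ℝ, t₀ < t → survJ N μ l (qA (t ^ β)) (qB (t ^ γ)) = 0) :=
  stmt9_general N hN hC1 hC3 μ hμ l hl hN11
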